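/- arXiv:2009.09148 — 2 statements merged into one kernel-verified Lean document; each statement's English description precedes it below -/
import Mathlib

section
/- Let F_{W₁} and F_{W₂} be probability distributions on [0,∞) with the same mean μ_W ∈ (0,∞), and let F_{Z*} be a probability distribution on [0,∞) whose mean μ_{Z*} satisfies 0 < μ_{Z*} < 1. Assume the Laplace–Stieltjes transforms satisfy |F̂_{W₁}(s) − F̂_{W₂}(s)| ≤ ∫₀^∞ |F̂_{W₁}(ts) − F̂_{W₂}(ts)| dF_{Z*}(t) for all s ≥ 0. Then F̂_{W₁} = F̂_{W₂} and hence F_{W₁} = F_{W₂}. -/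
/-!
Both transforms lie between `1 - μ_W s` and `1`, so `D(s) = |F̂_{W₁}(s) - F̂_{W₂}(s)| ≤ μ_W s`.
Feeding a bound `D(s) ≤ C s` into the hypothesis gives `D(s) ≤ C μ_{Z*} s`; iterating,
`D(s) ≤ C μ_{Z*}ⁿ s → 0`, so the transforms agree on `[0, ∞)`. Pushed forward by `x ↦ e^{-x}`
to `[0, 1]`, a distribution has `F̂(n)` as its `n`-th moment, and a finite measure on `[0, 1]` is
determined by its moments because polynomials in an injective function separate points.
-/

open MeasureTheory Filter Topology

/-- Laplace–Stieltjes transform of a (nonnegative) probability distribution. -/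
noncomputable def LS (F : Measure ℝ) (s : ℝ) : ℝ := ∫ x, Real.exp (-(s * x)) ∂F

theorem MeasureTheory.ae_le_of_measure_Iio_eq_zero {α : Type*} [MeasurableSpace α]
    [LinearOrder α] {μ : Measure α} {a : α} (h : μ (Set.Iio a) = 0) : ∀ᵐ x ∂μ, a ≤ x := by
  filter_upwards [measure_eq_zero_iff_ae_notMem.mp h] with x hx using not_lt.mp hx

namespace BoundedContinuousFunction

variable {E : Type*} [TopologicalSpace E]

noncomputable def polynomialsIn (g : E →ᵇ ℝ) : StarSubalgebra ℝ (E →ᵇ ℝ) where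
  toSubalgebra := (Polynomial.aeval g).range
  star_mem' {f} hf := by
    convert hf
    ext x
    exact star_trivial (f x)

theorem polynomialsIn_separatesPoints {g : E →ᵇ ℝ} (hg : Function.Injective g) :
    ((polynomialsIn g).map (toContinuousMapStarₐ ℝ)).SeparatesPoints := by
  intro x y hxy
  refine ⟨g, ⟨toContinuousMapStarₐ ℝ g, ⟨g, ⟨Polynomial.X, Polynomial.aeval_X g⟩, rfl⟩, rfl⟩,
    hg.ne hxy⟩

variable [MeasurableSpace E] [OpensMeasurableSpace E]

theorem integral_aeval_eq_of_integral_pow_eq {P P' : Measure E} [IsFiniteMeasure P]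
    [IsFiniteMeasure P'] {g : E →ᵇ ℝ} (h : ∀ n : ℕ, ∫ x, g x ^ n ∂P = ∫ x, g x ^ n ∂P')
    (p : Polynomial ℝ) : ∫ x, Polynomial.aeval g p x ∂P = ∫ x, Polynomial.aeval g p x ∂P' := by
  induction p using Polynomial.induction_on' with
  | add p q hp hq =>
    simp only [map_add, coe_add, Pi.add_apply]
    rw [integral_add (integrable _ _) (integrable _ _),
      integral_add (integrable _ _) (integrable _ _), hp, hq]
  | monomial n a =>
    simp only [Polynomial.aeval_monomial, algebraMap_apply, coe_mul, coe_pow, Pi.mul_apply,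
      Pi.pow_apply]
    rw [integral_const_mul, integral_const_mul, h n]

end BoundedContinuousFunction

open BoundedContinuousFunction in
theorem MeasureTheory.ext_of_integral_pow_eq {E : Type*} [MeasurableSpace E]
    [TopologicalSpace E] [PolishSpace E] [BorelSpace E]
    {P P' : Measure E} [IsFiniteMeasure P] [IsFiniteMeasure P'] {g : E →ᵇ ℝ}
    (hg : Function.Injective g)
    (h : ∀ n : ℕ, ∫ x, g x ^ n ∂P = ∫ x, g x ^ n ∂P') : P = P' := by
  refine ext_of_forall_mem_subalgebra_integral_eq_of_polish
    (polynomialsIn_separatesPoints hg) ?_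
  rintro _ ⟨p, rfl⟩
  exact integral_aeval_eq_of_integral_pow_eq h p

section LaplaceStieltjes

variable {F : Measure ℝ}

theorem integrable_exp_neg_mul [IsFiniteMeasure F] (hF : ∀ᵐ x ∂F, 0 ≤ x) {s : ℝ}
    (hs : 0 ≤ s) :
    Integrable (fun x => Real.exp (-(s * x))) F := by
  refine (integrable_const (1 : ℝ)).mono' (by fun_prop) ?_
  filter_upwards [hF] with x hx
  rw [Real.norm_of_nonneg (Real.exp_pos _).le, Real.exp_le_one_iff, neg_nonpos]
  exact mul_nonneg hs hx

theorem LS_le_one [IsProbabilityMeasure F] (hF : ∀ᵐ x ∂F, 0 ≤ x) {s : ℝ} (hs : 0 ≤ s) :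
    LS F s ≤ 1 := by
  calc LS F s ≤ ∫ _, (1 : ℝ) ∂F := by
        refine integral_mono_ae (integrable_exp_neg_mul hF hs) (integrable_const 1) ?_
        filter_upwards [hF] with x hx
        rw [Real.exp_le_one_iff, neg_nonpos]
        exact mul_nonneg hs hx
    _ = 1 := by simp

theorem one_sub_mul_integral_le_LS [IsProbabilityMeasure F] (hF : ∀ᵐ x ∂F, 0 ≤ x)
    (hi : Integrable (fun x => x) F) {s : ℝ} (hs : 0 ≤ s) :
    1 - s * ∫ x, x ∂F ≤ LS F s := by
  calc 1 - s * ∫ x, x ∂F = ∫ x, (1 - s * x) ∂F := by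
        rw [integral_sub (integrable_const 1) (hi.const_mul s), integral_const_mul]; simp
    _ ≤ LS F s := integral_mono ((integrable_const 1).sub (hi.const_mul s))
        (integrable_exp_neg_mul hF hs) fun x => by linarith [Real.add_one_le_exp (-(s * x))]

theorem abs_LS_sub_LS_le {F' : Measure ℝ} [IsProbabilityMeasure F] [IsProbabilityMeasure F']
    (hF : ∀ᵐ x ∂F, 0 ≤ x) (hF' : ∀ᵐ x ∂F', 0 ≤ x)
    (hi : Integrable (fun x => x) F) (hi' : Integrable (fun x => x) F')
    (hmean : ∫ x, x ∂F = ∫ x, x ∂F') {s : ℝ} (hs : 0 ≤ s) :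
    |LS F s - LS F' s| ≤ (∫ x, x ∂F) * s := by
  have h := one_sub_mul_integral_le_LS hF hi hs
  have h' := one_sub_mul_integral_le_LS hF' hi' hs
  rw [← hmean] at h'
  rw [abs_sub_le_iff]
  constructor <;> linarith [LS_le_one hF hs, LS_le_one hF' hs]

-- `|x|` only keeps the values in `[0, 1]` off the support `[0, ∞)`, where this is `e^{-x}`.
noncomputable def expNegAbs (x : ℝ) : Set.Icc (0 : ℝ) 1 :=
  ⟨Real.exp (-|x|), (Real.exp_pos _).le, Real.exp_le_one_iff.mpr (neg_nonpos.mpr (abs_nonneg x))⟩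

theorem continuous_expNegAbs : Continuous expNegAbs := by
  unfold expNegAbs; fun_prop

theorem integral_pow_map_expNegAbs (hF : ∀ᵐ x ∂F, 0 ≤ x) (n : ℕ) :
    ∫ y, (y : ℝ) ^ n ∂(F.map expNegAbs) = LS F n := by
  rw [integral_map continuous_expNegAbs.aemeasurable (by fun_prop)]
  refine integral_congr_ae ?_
  filter_upwards [hF] with x hx
  simp only [expNegAbs, abs_of_nonneg hx, ← Real.exp_nat_mul]
  ring_nf

theorem map_neg_log_map_expNegAbs (hF : ∀ᵐ x ∂F, 0 ≤ x) :
    (F.map expNegAbs).map (fun y : Set.Icc (0 : ℝ) 1 => -Real.log y) = F := by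
  rw [Measure.map_map (by fun_prop) continuous_expNegAbs.measurable]
  conv_rhs => rw [← Measure.map_id (μ := F)]
  refine Measure.map_congr ?_
  filter_upwards [hF] with x hx
  simp [expNegAbs, abs_of_nonneg hx]

theorem eq_of_LS_natCast_eq {F' : Measure ℝ} [IsProbabilityMeasure F] [IsProbabilityMeasure F']
    (hF : ∀ᵐ x ∂F, 0 ≤ x) (hF' : ∀ᵐ x ∂F', 0 ≤ x) (h : ∀ n : ℕ, LS F n = LS F' n) : F = F' := by
  have hmap : F.map expNegAbs = F'.map expNegAbs := by
    refine ext_of_integral_pow_eq (g := .mkOfCompact ⟨Subtype.val, continuous_subtype_val⟩)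
      Subtype.val_injective fun n => ?_
    simpa [integral_pow_map_expNegAbs hF, integral_pow_map_expNegAbs hF'] using h n
  rw [← map_neg_log_map_expNegAbs hF, hmap, map_neg_log_map_expNegAbs hF']

end LaplaceStieltjes

section Contraction

variable {ν : Measure ℝ} {D : ℝ → ℝ}

theorem le_mul_integral_mul_of_le_mul (hν : ∀ᵐ t ∂ν, 0 ≤ t)
    (hν_int : Integrable (fun t => t) ν)
    (hD_nonneg : ∀ s, 0 ≤ D s) (hD : ∀ s, 0 ≤ s → D s ≤ ∫ t, D (t * s) ∂ν) {C : ℝ}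
    (hC : ∀ s, 0 ≤ s → D s ≤ C * s) {s : ℝ} (hs : 0 ≤ s) :
    D s ≤ C * (∫ t, t ∂ν) * s := by
  calc D s ≤ ∫ t, D (t * s) ∂ν := hD s hs
    _ ≤ ∫ t, C * s * t ∂ν := by
      refine integral_mono_of_nonneg (.of_forall fun t => hD_nonneg _)
        (hν_int.const_mul (C * s)) ?_
      filter_upwards [hν] with t ht
      linarith [hC (t * s) (mul_nonneg ht hs)]
    _ = C * (∫ t, t ∂ν) * s := by rw [integral_const_mul]; ring

theorem eq_zero_of_le_integral_comp_mul (hν : ∀ᵐ t ∂ν, 0 ≤ t)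
    (hν_int : Integrable (fun t => t) ν) (hν_mean : ∫ t, t ∂ν < 1)
    (hD_nonneg : ∀ s, 0 ≤ D s) (hD : ∀ s, 0 ≤ s → D s ≤ ∫ t, D (t * s) ∂ν) {C : ℝ}
    (hC : ∀ s, 0 ≤ s → D s ≤ C * s) {s : ℝ} (hs : 0 ≤ s) : D s = 0 := by
  set ρ := ∫ t, t ∂ν
  have hρ : 0 ≤ ρ := integral_nonneg_of_ae hν
  have hpow : ∀ n : ℕ, D s ≤ C * ρ ^ n * s := by
    intro n
    induction n generalizing s with
    | zero => simpa using hC s hs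
    | succ n ih =>
      simpa [pow_succ, mul_assoc] using le_mul_integral_mul_of_le_mul hν hν_int hD_nonneg hD
        (fun s hs => ih hs) hs
  have hlim : Tendsto (fun n : ℕ => C * ρ ^ n * s) atTop (𝓝 0) := by
    simpa using ((tendsto_pow_atTop_nhds_zero_of_lt_one hρ hν_mean).const_mul C).mul_const s
  exact le_antisymm (ge_of_tendsto' hlim hpow) (hD_nonneg s)

end Contraction

theorem stmt16_general (FW1 FW2 FZ : Measure ℝ)
    [IsProbabilityMeasure FW1] [IsProbabilityMeasure FW2] [IsProbabilityMeasure FZ]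
    (h1 : FW1 (Set.Iio 0) = 0) (h2 : FW2 (Set.Iio 0) = 0) (hz : FZ (Set.Iio 0) = 0)
    (μW : ℝ)
    (hi1 : Integrable (fun x => x) FW1) (hi2 : Integrable (fun x => x) FW2)
    (hm1 : (∫ x, x ∂FW1) = μW) (hm2 : (∫ x, x ∂FW2) = μW)
    (hiz : Integrable (fun t => t) FZ) (hz1 : (∫ t, t ∂FZ) < 1)
    (hineq : ∀ s : ℝ, 0 ≤ s →
      |LS FW1 s - LS FW2 s| ≤ ∫ t, |LS FW1 (t * s) - LS FW2 (t * s)| ∂FZ) :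
    (∀ s : ℝ, LS FW1 s = LS FW2 s) ∧ FW1 = FW2 := by
  have hW1 := ae_le_of_measure_Iio_eq_zero h1
  have hW2 := ae_le_of_measure_Iio_eq_zero h2
  have hLS : ∀ s : ℝ, 0 ≤ s → LS FW1 s = LS FW2 s := fun s hs =>
    sub_eq_zero.mp <| abs_eq_zero.mp <|
      eq_zero_of_le_integral_comp_mul (ae_le_of_measure_Iio_eq_zero hz) hiz hz1
        (fun _ => abs_nonneg _) hineq
        (fun _ => abs_LS_sub_LS_le hW1 hW2 hi1 hi2 (hm1.trans hm2.symm)) hs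
  have hF : FW1 = FW2 := eq_of_LS_natCast_eq hW1 hW2 fun n => hLS n n.cast_nonneg
  exact ⟨fun s => by rw [hF], hF⟩

/-- Lemma 10: if `F_{W₁}, F_{W₂}` are probability distributions on `[0,∞)` with the same
mean `μ_W ∈ (0,∞)`, `F_{Z*}` is a probability distribution on `[0,∞)` with mean in
`(0,1)`, and `|F̂_{W₁}(s) − F̂_{W₂}(s)| ≤ ∫₀^∞ |F̂_{W₁}(ts) − F̂_{W₂}(ts)| dF_{Z*}(t)`
for all `s ≥ 0`, then `F̂_{W₁} = F̂_{W₂}` and hence `F_{W₁} = F_{W₂}`. -/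
theorem stmt16 (FW1 FW2 FZ : Measure ℝ)
    [IsProbabilityMeasure FW1] [IsProbabilityMeasure FW2] [IsProbabilityMeasure FZ]
    (h1 : FW1 (Set.Iio 0) = 0) (h2 : FW2 (Set.Iio 0) = 0) (hz : FZ (Set.Iio 0) = 0)
    (μW : ℝ) (hμW : 0 < μW)
    (hi1 : Integrable (fun x => x) FW1) (hi2 : Integrable (fun x => x) FW2)
    (hm1 : (∫ x, x ∂FW1) = μW) (hm2 : (∫ x, x ∂FW2) = μW)
    (hiz : Integrable (fun t => t) FZ) (hz0 : 0 < ∫ t, t ∂FZ) (hz1 : (∫ t, t ∂FZ) < 1)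
    (hineq : ∀ s : ℝ, 0 ≤ s →
      |LS FW1 s - LS FW2 s| ≤ ∫ t, |LS FW1 (t * s) - LS FW2 (t * s)| ∂FZ) :
    (∀ s : ℝ, LS FW1 s = LS FW2 s) ∧ FW1 = FW2 :=
  stmt16_general FW1 FW2 FZ h1 h2 hz μW hi1 hi2 hm1 hm2 hiz hz1 hineq
end

section
/- Let F be a probability distribution on [0,∞) with mean μ ∈ (0,∞). Then the convolution of F with itself equals the length-biased distribution induced by F (i.e., F ⋆ F = F_Z), if and only if, F is the exponential distribution with mean μ (the distribution with density (1/μ)e^{−x/μ} on [0,∞)). -/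
open MeasureTheory

/-- The length-biased distribution induced by `F` with mean `μ`:
`F_Z([0,z]) = (1/μ) ∫₀^z x dF(x)`, i.e. `F` weighted by the density `x/μ`. -/
noncomputable def lengthBiased (F : Measure ℝ) (μ : ℝ) : Measure ℝ :=
  F.withDensity (fun x => ENNReal.ofReal (x / μ))

/-- The exponential distribution with mean `μ`: density `(1/μ) e^{−x/μ}` on `(0,∞)`. -/
noncomputable def expMeas (μ : ℝ) : Measure ℝ :=
  (volume.restrict (Set.Ioi 0)).withDensity
    (fun x => ENNReal.ofReal ((1 / μ) * Real.exp (-(x / μ))))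

/-!
Write `M t = ∫ exp (t x) dF(x)` for `t ≤ 0` (this is `mgf id F`). Convolution multiplies
transforms and the length-biased law has transform `μ⁻¹ M'`, so `F ⋆ F = F_Z` is equivalent to
`M ^ 2 = μ⁻¹ M'` on `(-∞, 0]`. Then `(1 / M)' = -μ` and `M 0 = 1`, so `M t = (1 - μ t)⁻¹`, the
transform of the exponential law. A finite measure on `[0, ∞)` is determined by its transform at
the negative integers: under `x ↦ exp (-x)` these become the moments of a measure on `[0, 1]`,
and polynomials are dense in `C([0, 1])`.
-/

open ProbabilityTheory Real Set Polynomial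

section Moments

variable {P Q : Measure ℝ} [IsFiniteMeasure P] [IsFiniteMeasure Q] {a b : ℝ}

lemma integrable_of_ae_mem_Icc (hP : ∀ᵐ x ∂P, x ∈ Icc a b) {f : ℝ → ℝ} (hf : Continuous f) :
    Integrable f P := by
  rw [← Measure.restrict_eq_self_of_ae_mem hP]
  exact hf.continuousOn.integrableOn_Icc

lemma dist_integral_le_of_ae_mem_Icc (hP : ∀ᵐ x ∂P, x ∈ Icc a b) {f g : ℝ → ℝ}
    (hf : Continuous f) (hg : Continuous g) {δ : ℝ} (hfg : ∀ x ∈ Icc a b, |f x - g x| < δ) :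
    dist (∫ x, f x ∂P) (∫ x, g x ∂P) ≤ δ * P.real univ := by
  rw [dist_eq_norm, ← integral_sub (integrable_of_ae_mem_Icc hP hf)
    (integrable_of_ae_mem_Icc hP hg)]
  refine norm_integral_le_of_norm_le_const ?_
  filter_upwards [hP] with x hx using (hfg x hx).le

lemma integral_eval_eq_of_integral_pow_eq (hP : ∀ᵐ x ∂P, x ∈ Icc a b)
    (hQ : ∀ᵐ x ∂Q, x ∈ Icc a b) (h : ∀ n : ℕ, ∫ x, x ^ n ∂P = ∫ x, x ^ n ∂Q) (p : ℝ[X]) :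
    ∫ x, p.eval x ∂P = ∫ x, p.eval x ∂Q := by
  induction p using Polynomial.induction_on' with
  | add p q hp hq =>
    simp only [eval_add]
    rw [integral_add (integrable_of_ae_mem_Icc hP p.continuous)
        (integrable_of_ae_mem_Icc hP q.continuous),
      integral_add (integrable_of_ae_mem_Icc hQ p.continuous)
        (integrable_of_ae_mem_Icc hQ q.continuous), hp, hq]
  | monomial n c =>
    simp only [eval_monomial]
    rw [integral_const_mul, integral_const_mul, h n]

lemma integral_eq_of_integral_pow_eq (hP : ∀ᵐ x ∂P, x ∈ Icc a b)
    (hQ : ∀ᵐ x ∂Q, x ∈ Icc a b) (h : ∀ n : ℕ, ∫ x, x ^ n ∂P = ∫ x, x ^ n ∂Q)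
    {f : ℝ → ℝ} (hf : Continuous f) :
    ∫ x, f x ∂P = ∫ x, f x ∂Q := by
  refine eq_of_forall_dist_le fun ε hε => ?_
  set C := P.real univ + Q.real univ + 1
  have hC : 0 < C := by positivity
  obtain ⟨p, hp⟩ := exists_polynomial_near_of_continuousOn a b f hf.continuousOn (ε / C)
    (by positivity)
  calc dist (∫ x, f x ∂P) (∫ x, f x ∂Q)
      ≤ dist (∫ x, p.eval x ∂P) (∫ x, f x ∂P) + dist (∫ x, p.eval x ∂Q) (∫ x, f x ∂Q) := by
        rw [← integral_eval_eq_of_integral_pow_eq hP hQ h]; exact dist_triangle_left _ _ _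
    _ ≤ ε / C * P.real univ + ε / C * Q.real univ :=
        add_le_add (dist_integral_le_of_ae_mem_Icc hP p.continuous hf hp)
          (dist_integral_le_of_ae_mem_Icc hQ p.continuous hf hp)
    _ ≤ ε := by
        rw [← mul_add, div_mul_eq_mul_div, div_le_iff₀ hC]
        gcongr; linarith

theorem MeasureTheory.Measure.ext_of_integral_pow_eq (hP : ∀ᵐ x ∂P, x ∈ Icc a b)
    (hQ : ∀ᵐ x ∂Q, x ∈ Icc a b) (h : ∀ n : ℕ, ∫ x, x ^ n ∂P = ∫ x, x ^ n ∂Q) : P = Q :=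
  ext_of_forall_integral_eq_of_IsFiniteMeasure fun f =>
    integral_eq_of_integral_pow_eq hP hQ h f.continuous

end Moments

section MgfNonneg

variable {P Q F : Measure ℝ}

lemma ae_nonneg_of_measure_Iio_eq_zero (hF : F (Iio 0) = 0) : ∀ᵐ x ∂F, 0 ≤ x := by
  filter_upwards [measure_eq_zero_iff_ae_notMem.1 hF] with x hx using not_lt.1 hx

lemma Iic_subset_integrableExpSet [IsFiniteMeasure F] (hF : ∀ᵐ x ∂F, 0 ≤ x) :
    Iic 0 ⊆ integrableExpSet id F := fun t ht => by
  refine (integrable_const (1 : ℝ)).mono' (by fun_prop) ?_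
  filter_upwards [hF] with x hx
  rw [norm_of_nonneg (exp_pos _).le, id, exp_le_one_iff]
  exact mul_nonpos_of_nonpos_of_nonneg ht hx

lemma continuousOn_mgf_Iic [IsFiniteMeasure F] (hF : ∀ᵐ x ∂F, 0 ≤ x) :
    ContinuousOn (mgf id F) (Iic 0) := by
  refine continuousOn_of_dominated (bound := fun _ => 1) (fun t _ => by fun_prop)
    (fun t ht => ?_) (integrable_const 1) (ae_of_all _ fun x => by fun_prop)
  filter_upwards [hF] with x hx
  rw [norm_of_nonneg (exp_pos _).le, id, exp_le_one_iff]
  exact mul_nonpos_of_nonpos_of_nonneg ht hx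

lemma hasDerivAt_mgf_of_neg [IsFiniteMeasure F] (hF : ∀ᵐ x ∂F, 0 ≤ x) {t : ℝ} (ht : t < 0) :
    HasDerivAt (mgf id F) (∫ x, x * exp (t * x) ∂F) t :=
  hasDerivAt_mgf (interior_mono (Iic_subset_integrableExpSet hF) (by simpa using ht))

theorem MeasureTheory.Measure.ext_of_mgf_neg_nat_eq [IsFiniteMeasure P] [IsFiniteMeasure Q]
    (hP : ∀ᵐ x ∂P, 0 ≤ x) (hQ : ∀ᵐ x ∂Q, 0 ≤ x)
    (h : ∀ n : ℕ, mgf id P (-n) = mgf id Q (-n)) : P = Q := by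
  have hφ : Measurable fun x : ℝ => exp (-x) := by fun_prop
  have hφP : ∀ {R : Measure ℝ}, (∀ᵐ x ∂ R, 0 ≤ x) → ∀ᵐ y ∂(R.map fun x => exp (-x)), y ∈ Icc 0 1 :=
    fun hR => (ae_map_iff hφ.aemeasurable measurableSet_Icc).2 <| by
      filter_upwards [hR] with x hx using ⟨(exp_pos _).le, exp_le_one_iff.2 (by linarith)⟩
  have hmoment : ∀ (R : Measure ℝ) (n : ℕ),
      ∫ y, y ^ n ∂(R.map fun x => exp (-x)) = mgf id R (-n) := fun R n => by
    rw [integral_map hφ.aemeasurable (by fun_prop), mgf]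
    simp only [id, ← exp_nat_mul, neg_mul, mul_neg]
  have hmap : P.map (fun x => exp (-x)) = Q.map (fun x => exp (-x)) :=
    Measure.ext_of_integral_pow_eq (hφP hP) (hφP hQ) fun n => by rw [hmoment, hmoment, h]
  have hlog : (fun y : ℝ => -log y) ∘ (fun x => exp (-x)) = id := by
    funext x; simp
  rw [← Measure.map_id (μ := P), ← Measure.map_id (μ := Q), ← hlog,
    ← Measure.map_map (by fun_prop) hφ, ← Measure.map_map (by fun_prop) hφ, hmap]

lemma mgf_eq_inv_of_sq_eq [IsProbabilityMeasure F] (hF : ∀ᵐ x ∂F, 0 ≤ x) {μ : ℝ} (hμ : μ ≠ 0)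
    (h : ∀ t < 0, mgf id F t ^ 2 = μ⁻¹ * ∫ x, x * exp (t * x) ∂F) {t : ℝ} (ht : t ≤ 0) :
    mgf id F t = (1 - μ * t)⁻¹ := by
  rcases ht.eq_or_lt with rfl | ht
  · simp
  have hpos : ∀ s ≤ 0, 0 < mgf id F s := fun s hs =>
    mgf_pos (Iic_subset_integrableExpSet hF hs)
  have hderiv : ∀ s ∈ Ioo t 0, HasDerivAt (fun s => (mgf id F s)⁻¹) (-μ) s := fun s hs => by
    have hslope : -(∫ x, x * exp (s * x) ∂F) / mgf id F s ^ 2 = -μ := by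
      rw [div_eq_iff (pow_ne_zero 2 (hpos s hs.2.le).ne'), h s hs.2, neg_mul, ← mul_assoc,
        mul_inv_cancel₀ hμ, one_mul]
    exact hslope ▸ (hasDerivAt_mgf_of_neg hF hs.2).inv (hpos s hs.2.le).ne'
  obtain ⟨c, -, hc⟩ := exists_hasDerivAt_eq_slope _ _ ht
    (((continuousOn_mgf_Iic hF).mono Icc_subset_Iic_self).inv₀
      fun s hs => (hpos s hs.2).ne') hderiv
  simp only [Pi.inv_apply, mgf_zero, inv_one] at hc
  rw [eq_div_iff (by linarith)] at hc
  rw [← inv_inv (mgf id F t)]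
  congr 1
  linarith

end MgfNonneg

section LengthBiased

variable {F : Measure ℝ}

lemma mgf_id_conv (P Q : Measure ℝ) [SFinite P] [SFinite Q] (t : ℝ) :
    mgf id (P ∗ Q) t = mgf id P t * mgf id Q t := by
  rw [mgf, Measure.conv, integral_map (by fun_prop) (by fun_prop)]
  simp only [id, mul_add, exp_add]
  exact integral_prod_mul (fun x => exp (t * x)) (fun x => exp (t * x))

lemma ae_nonneg_conv {P Q : Measure ℝ} [SFinite P] [SFinite Q] (hP : ∀ᵐ x ∂P, 0 ≤ x)
    (hQ : ∀ᵐ x ∂Q, 0 ≤ x) : ∀ᵐ x ∂(P ∗ Q), 0 ≤ x := by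
  refine (ae_map_iff (by fun_prop) measurableSet_Ici).2 ?_
  filter_upwards [Measure.quasiMeasurePreserving_fst.ae hP,
    Measure.quasiMeasurePreserving_snd.ae hQ] with p hp hq using add_nonneg hp hq

lemma mgf_id_lengthBiased (hF : ∀ᵐ x ∂F, 0 ≤ x) {μ : ℝ} (hμ : 0 ≤ μ) (t : ℝ) :
    mgf id (lengthBiased F μ) t = μ⁻¹ * ∫ x, x * exp (t * x) ∂F := by
  rw [mgf, lengthBiased, integral_withDensity_eq_integral_toReal_smul (by fun_prop)
    (ae_of_all _ fun _ => ENNReal.ofReal_lt_top), ← integral_const_mul]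
  refine integral_congr_ae ?_
  filter_upwards [hF] with x hx
  rw [ENNReal.toReal_ofReal (div_nonneg hx hμ), smul_eq_mul, id]
  ring

lemma isFiniteMeasure_lengthBiased [IsFiniteMeasure F] (hint : Integrable (fun x => x) F)
    (μ : ℝ) : IsFiniteMeasure (lengthBiased F μ) :=
  isFiniteMeasure_withDensity_ofReal (hint.div_const μ).2

lemma conv_self_eq_lengthBiased_iff [IsProbabilityMeasure F] (hF : ∀ᵐ x ∂F, 0 ≤ x) {μ : ℝ}
    (hμ : 0 ≤ μ) [IsFiniteMeasure (lengthBiased F μ)] :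
    F ∗ F = lengthBiased F μ ↔ ∀ t ≤ 0, mgf id F t ^ 2 = μ⁻¹ * ∫ x, x * exp (t * x) ∂F := by
  refine ⟨fun h t _ => ?_, fun h => ?_⟩
  · rw [sq, ← mgf_id_conv, h, mgf_id_lengthBiased hF hμ]
  · refine Measure.ext_of_mgf_neg_nat_eq (ae_nonneg_conv hF hF)
      ((withDensity_absolutelyContinuous _ _).ae_le hF) fun n => ?_
    rw [mgf_id_conv, ← sq, mgf_id_lengthBiased hF hμ, h _ (by simp)]

end LengthBiased

section ExpMeas

variable {μ : ℝ}

lemma integral_expMeas (hμ : 0 < μ) (g : ℝ → ℝ) :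
    ∫ x, g x ∂expMeas μ = ∫ x in Ioi 0, μ⁻¹ * (exp (-(x / μ)) * g x) := by
  rw [expMeas, integral_withDensity_eq_integral_toReal_smul (by fun_prop)
    (ae_of_all _ fun _ => ENNReal.ofReal_lt_top)]
  refine integral_congr_ae (ae_of_all _ fun x => ?_)
  dsimp only
  rw [ENNReal.toReal_ofReal (by positivity), smul_eq_mul, one_div, mul_assoc]

lemma mgf_id_expMeas (hμ : 0 < μ) {t : ℝ} (ht : t < μ⁻¹) :
    mgf id (expMeas μ) t = (1 - μ * t)⁻¹ := by
  have hexp : ∀ x, exp (-(x / μ)) * exp (t * id x) = exp ((t - μ⁻¹) * x) := fun x => by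
    rw [← exp_add, id]; ring_nf
  rw [mgf, integral_expMeas hμ]
  simp only [hexp]
  have h1 : 0 < 1 - μ * t := by nlinarith [mul_inv_cancel₀ hμ.ne']
  rw [integral_const_mul, integral_exp_mul_Ioi (by linarith), mul_zero, exp_zero,
    show t - μ⁻¹ = -((1 - μ * t) / μ) by field_simp; ring]
  field_simp

lemma integral_mul_exp_expMeas (hμ : 0 < μ) {t : ℝ} (ht : t < μ⁻¹) :
    ∫ x, x * exp (t * x) ∂expMeas μ = μ * ((1 - μ * t)⁻¹) ^ 2 := by
  have hexp : ∀ x ∈ Ioi (0 : ℝ), exp (-(x / μ)) * (x * exp (t * x))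
      = x ^ ((2 : ℝ) - 1) * exp (-((μ⁻¹ - t) * x)) := fun x _ => by
    rw [show (2 : ℝ) - 1 = 1 by norm_num, rpow_one, mul_left_comm, ← exp_add]; ring_nf
  rw [integral_expMeas hμ, integral_const_mul, setIntegral_congr_fun measurableSet_Ioi hexp,
    integral_rpow_mul_exp_neg_mul_Ioi two_pos (by linarith), Gamma_two]
  have h1 : 0 < 1 - μ * t := by nlinarith [mul_inv_cancel₀ hμ.ne']
  rw [rpow_two, show μ⁻¹ - t = (1 - μ * t) / μ by field_simp]
  field_simp

lemma isProbabilityMeasure_expMeas (hμ : 0 < μ) : IsProbabilityMeasure (expMeas μ) := by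
  have h := mgf_id_expMeas hμ (inv_pos.2 hμ)
  rw [mgf_zero', mul_zero, sub_zero, inv_one, measureReal_def, ENNReal.toReal_eq_one_iff] at h
  exact ⟨h⟩

lemma ae_pos_expMeas (μ : ℝ) : ∀ᵐ x ∂expMeas μ, 0 < x :=
  (withDensity_absolutelyContinuous _ _).ae_le (ae_restrict_mem measurableSet_Ioi)

end ExpMeas

theorem stmt17_general (F : Measure ℝ) [IsProbabilityMeasure F] (hF : F (Set.Iio 0) = 0)
    (μ : ℝ) (hμ : 0 < μ) (hint : Integrable (fun x => x) F) :
    Measure.map (fun p : ℝ × ℝ => p.1 + p.2) (F.prod F) = lengthBiased F μ ↔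
      F = expMeas μ := by
  have hF₀ := ae_nonneg_of_measure_Iio_eq_zero hF
  have := isFiniteMeasure_lengthBiased hint μ
  have := isProbabilityMeasure_expMeas hμ
  change F ∗ F = lengthBiased F μ ↔ _
  rw [conv_self_eq_lengthBiased_iff hF₀ hμ.le]
  constructor
  · intro h
    refine Measure.ext_of_mgf_neg_nat_eq hF₀ ((ae_pos_expMeas μ).mono fun _ => le_of_lt)
      fun n => ?_
    have hn : -(n : ℝ) ≤ 0 := neg_nonpos.2 n.cast_nonneg
    rw [mgf_eq_inv_of_sq_eq hF₀ hμ.ne' (fun t ht => h t ht.le) hn,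
      mgf_id_expMeas hμ (hn.trans_lt (inv_pos.2 hμ))]
  · rintro rfl t ht
    have ht' : t < μ⁻¹ := ht.trans_lt (inv_pos.2 hμ)
    rw [mgf_id_expMeas hμ ht', integral_mul_exp_expMeas hμ ht', ← mul_assoc,
      inv_mul_cancel₀ hμ.ne', one_mul]

/-- Example 1(a): for a probability distribution `F` on `[0,∞)` with mean `μ ∈ (0,∞)`,
the convolution `F ⋆ F` equals the length-biased distribution induced by `F` iff `F` is
the exponential distribution with mean `μ`. -/
theorem stmt17 (F : Measure ℝ) [IsProbabilityMeasure F] (hF : F (Set.Iio 0) = 0)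
    (μ : ℝ) (hμ : 0 < μ) (hint : Integrable (fun x => x) F) (hmean : (∫ x, x ∂F) = μ) :
    Measure.map (fun p : ℝ × ℝ => p.1 + p.2) (F.prod F) = lengthBiased F μ ↔
      F = expMeas μ :=
  stmt17_general F hF μ hμ hint
end
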